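/- arXiv:math/0403068 — 4 statements merged into one kernel-verified Lean document; each statement's English description precedes it below -/
import Mathlib

section
/- Let n ≥ 1 and let α, β > 0 be real constants. Then there exists a constant γ > 0, depending only on α, β and n, such that for every pair of n×n Hermitian positive definite complex matrices A and B satisfying (i) B − α·A is positive semidefinite and (ii) det B ≤ β · det A (both determinants being positive real numbers), the matrix γ·A − B is positive semidefinite. (Lemma 6.3 of the paper.) -/
open scoped ComplexOrder

/-!
Conjugating by `A^{-1/2}` reduces to the case `A = 1`. There the eigenvalues `λᵢ` of `B`
satisfy `λᵢ ≥ α` and `∏ λᵢ = det B ≤ β`, so each `λᵢ ≤ β / α ^ (n - 1)`, which is `B ≤ γ • 1`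
for `γ = β / α ^ (n - 1)`.
-/

theorem le_div_pow_of_forall_le_of_prod_le {ι : Type*} [Fintype ι] {f : ι → ℝ} {α β : ℝ}
    (hα : 0 < α) (hf : ∀ i, α ≤ f i) (hprod : ∏ i, f i ≤ β) (i : ι) :
    f i ≤ β / α ^ (Fintype.card ι - 1) := by
  classical
  have hrest : α ^ (Fintype.card ι - 1) ≤ ∏ j ∈ Finset.univ.erase i, f j := by
    simpa [Finset.card_erase_of_mem] using
      Finset.prod_le_prod (fun _ _ => hα.le) (fun j _ => hf j) (s := Finset.univ.erase i)
  rw [le_div_iff₀ (pow_pos hα _)]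
  calc f i * α ^ (Fintype.card ι - 1) ≤ f i * ∏ j ∈ Finset.univ.erase i, f j :=
        mul_le_mul_of_nonneg_left hrest (hα.le.trans (hf i))
    _ = ∏ j, f j := Finset.mul_prod_erase _ f (Finset.mem_univ i)
    _ ≤ β := hprod

open Ring

namespace CFC

variable {A : Type*} [PartialOrder A] [Ring A] [StarRing A] [TopologicalSpace A]
  [StarOrderedRing A] [Algebra ℝ A] [ContinuousFunctionalCalculus ℝ A IsSelfAdjoint]
  [NonnegSpectrumClass ℝ A] [IsSemitopologicalRing A] [T2Space A]

theorem conjSqrt_le_conjSqrt_iff {c a b : A} (hc : IsStrictlyPositive c) :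
    conjSqrt c a ≤ conjSqrt c b ↔ a ≤ b := by
  refine ⟨fun h => ?_, conjSqrt_le_conjSqrt⟩
  simpa only [conjSqrt_ringInverse_conjSqrt c _ hc] using conjSqrt_le_conjSqrt (c := c⁻¹ʳ) h

theorem conjSqrt_ringInverse_smul_self {c : A} (hc : IsStrictlyPositive c) (r : ℝ) :
    conjSqrt c⁻¹ʳ (r • c) = algebraMap ℝ A r := by
  rw [map_smul, conjSqrt_ringInverse_self c, Algebra.algebraMap_eq_smul_one]

end CFC

namespace Matrix

open scoped MatrixOrder
open CFC

variable {ι 𝕜 : Type*} [Fintype ι] [DecidableEq ι] [RCLike 𝕜]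

theorem det_conjSqrt {A : Matrix ι ι 𝕜} (hA : A.PosSemidef) (X : Matrix ι ι 𝕜) :
    (conjSqrt A X).det = A.det * X.det := by
  rw [conjSqrt_apply, det_mul, det_mul, mul_right_comm, ← det_mul,
    sqrt_mul_sqrt_self A hA.nonneg]

theorem le_algebraMap_of_algebraMap_le_of_det_le {C : Matrix ι ι 𝕜} {α β : ℝ} (hα : 0 < α)
    (hC : algebraMap ℝ _ α ≤ C) (hdet : RCLike.re C.det ≤ β) :
    C ≤ algebraMap ℝ _ (β / α ^ (Fintype.card ι - 1)) := by
  have hCh : C.IsHermitian :=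
    IsSelfAdjoint.of_nonneg ((algebraMap_nonneg (β := Matrix ι ι 𝕜) hα.le).trans hC)
  have hlow : ∀ i, α ≤ hCh.eigenvalues i := fun i =>
    (algebraMap_le_iff_le_spectrum (a := C)).1 hC _ (hCh.eigenvalues_mem_spectrum_real i)
  have hprod : ∏ i, hCh.eigenvalues i ≤ β := by
    rwa [hCh.det_eq_prod_eigenvalues, ← RCLike.ofReal_prod, RCLike.ofReal_re] at hdet
  rw [le_algebraMap_iff_spectrum_le, hCh.spectrum_real_eq_range_eigenvalues]
  rintro _ ⟨i, rfl⟩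
  exact le_div_pow_of_forall_le_of_prod_le hα hlow hprod i

theorem le_smul_of_smul_le_of_det_le {A B : Matrix ι ι 𝕜} {α β : ℝ} (hA : A.PosDef) (hα : 0 < α)
    (hAB : α • A ≤ B) (hdet : RCLike.re B.det ≤ β * RCLike.re A.det) :
    B ≤ (β / α ^ (Fintype.card ι - 1)) • A := by
  have hA' : IsStrictlyPositive A := isStrictlyPositive_iff_posDef.2 hA
  set C := conjSqrt A⁻¹ʳ B
  have hB : B = conjSqrt A C := (conjSqrt_conjSqrt_ringInverse A B).symm
  have hC : algebraMap ℝ _ α ≤ C := by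
    rw [← conjSqrt_ringInverse_smul_self hA']
    exact conjSqrt_le_conjSqrt hAB
  have hdetC : RCLike.re C.det ≤ β := by
    obtain ⟨d, hd, hdA⟩ := RCLike.pos_iff_exists_ofReal.1 hA.det_pos
    rw [hB, det_conjSqrt hA.posSemidef, ← hdA, RCLike.re_ofReal_mul, RCLike.ofReal_re] at hdet
    exact le_of_mul_le_mul_left (by linarith) hd
  rw [← conjSqrt_le_conjSqrt_iff hA'.ringInverse, conjSqrt_ringInverse_smul_self hA']
  exact le_algebraMap_of_algebraMap_le_of_det_le hα hC hdetC

end Matrix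

theorem ricci_metric_lemma_lin100_general (n : ℕ) (α β : ℝ)
    (hα : 0 < α) (hβ : 0 < β) :
    ∃ γ : ℝ, 0 < γ ∧ ∀ A B : Matrix (Fin n) (Fin n) ℂ,
      A.PosDef → B.PosDef → (B - (α : ℂ) • A).PosSemidef →
      B.det.re ≤ β * A.det.re → ((γ : ℂ) • A - B).PosSemidef := by
  refine ⟨β / α ^ (n - 1), by positivity, fun A B hA _ hAB hdet => ?_⟩
  open scoped MatrixOrder in
  have hAB' : α • A ≤ B := by rwa [Matrix.le_iff, ← Complex.coe_smul]
  have hBA := Matrix.le_smul_of_smul_le_of_det_le hA hα hAB' hdet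
  rwa [Matrix.le_iff, ← Complex.coe_smul, Fintype.card_fin] at hBA

/-- Lemma 6.3: if `B ≥ α A` and `det B ≤ β det A` for positive definite Hermitian
matrices `A`, `B`, then `B ≤ γ A` for a constant `γ` depending only on `α`, `β`, `n`. -/
theorem ricci_metric_lemma_lin100 (n : ℕ) (hn : 1 ≤ n) (α β : ℝ)
    (hα : 0 < α) (hβ : 0 < β) :
    ∃ γ : ℝ, 0 < γ ∧ ∀ A B : Matrix (Fin n) (Fin n) ℂ,
      A.PosDef → B.PosDef → (B - (α : ℂ) • A).PosSemidef →
      B.det.re ≤ β * A.det.re → ((γ : ℂ) • A - B).PosSemidef :=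
  ricci_metric_lemma_lin100_general n α β hα hβ
end

section
/- For every n ≥ 1 and all real constants M > 0 and α > 0, there exists C₀ > 0 such that for all n×n Hermitian complex matrices A and B whose entries have absolute value at most M, with A positive semidefinite and B − α·I positive semidefinite, and for every real number C ≥ C₀, one has det(A + C·B) ≥ (1/2)·det(B)·Cⁿ. (The key determinant lower bound in the proof of Lemma 5.2 of the paper.) -/
open scoped ComplexOrder

open Matrix in
/-- `det (1 + S)` is a real number `≥ 1` when `S` is positive semidefinite. -/
lemma det_one_add_posSemidef {m : Type*} [Fintype m] [DecidableEq m]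
    {S : Matrix m m ℂ} (hS : S.PosSemidef) :
    ∃ r : ℝ, 1 ≤ r ∧ (1 + S).det = (r : ℂ) := by
  classical
  set U : Matrix m m ℂ := (hS.1.eigenvectorUnitary : Matrix m m ℂ) with hU
  have hUU : U * star U = 1 := (Matrix.mem_unitaryGroup_iff).mp hS.1.eigenvectorUnitary.2
  set D : Matrix m m ℂ := Matrix.diagonal (RCLike.ofReal ∘ hS.1.eigenvalues) with hD
  have hspec : S = U * D * star U := hS.1.spectral_theorem
  have key : 1 + S = U * (1 + D) * star U := by
    rw [mul_add, add_mul, mul_one, hUU, ← hspec]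
  refine ⟨∏ i, (1 + hS.1.eigenvalues i), ?_, ?_⟩
  · calc (1:ℝ) = ∏ _i : m, 1 := by simp
      _ ≤ ∏ i, (1 + hS.1.eigenvalues i) :=
        Finset.prod_le_prod (fun i _ => zero_le_one)
          (fun i _ => le_add_of_nonneg_right (hS.eigenvalues_nonneg i))
  · have hdet : (1 + S).det = (1 + D).det := by
      have hUU' : star U * U = 1 := (Matrix.mem_unitaryGroup_iff').mp hS.1.eigenvectorUnitary.2
      rw [key, Matrix.det_mul, Matrix.det_mul, mul_comm, ← mul_assoc, ← Matrix.det_mul, hUU']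
      simp
    rw [hdet, hD, ← Matrix.diagonal_one, Matrix.diagonal_add, Matrix.det_diagonal]
    push_cast
    rfl

open Matrix in
/-- Determinant monotonicity: for `X` psd and `Y` posdef, `det Y ≤ det (X + Y)` (real parts). -/
lemma det_re_le_det_add {m : Type*} [Fintype m] [DecidableEq m]
    {X Y : Matrix m m ℂ} (hX : X.PosSemidef) (hY : Y.PosDef) :
    Y.det.re ≤ ((X + Y).det).re := by
  classical
  obtain ⟨R, hR, hRR⟩ : ∃ R : Matrix m m ℂ, R.PosSemidef ∧ R * R = Y := by
    open scoped MatrixOrder in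
    exact ⟨CFC.sqrt Y, (CFC.sqrt_nonneg Y).posSemidef,
      CFC.sqrt_mul_sqrt_self Y hY.posSemidef.nonneg⟩
  have hdetY : R.det * R.det = Y.det := by rw [← Matrix.det_mul, hRR]
  have hYdet : Y.det ≠ 0 := hY.det_pos.ne'
  have hRdet : IsUnit R.det := by
    refine isUnit_iff_ne_zero.mpr fun h => hYdet ?_
    rw [← hdetY, h, mul_zero]
  have hRinvH : R⁻¹.IsHermitian := hR.1.inv
  set S := R⁻¹ * X * R⁻¹ with hSdef
  have hS : S.PosSemidef := by
    have := hX.mul_mul_conjTranspose_same R⁻¹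
    rwa [hRinvH.eq] at this
  have hid : X + Y = R * (1 + S) * R := by
    rw [mul_add, mul_one, add_mul, hRR, hSdef]
    rw [← mul_assoc, ← mul_assoc, Matrix.mul_nonsing_inv R hRdet, one_mul, mul_assoc,
      Matrix.nonsing_inv_mul R hRdet, mul_one]
    rw [add_comm]
  obtain ⟨r, hr1, hrdet⟩ := det_one_add_posSemidef hS
  have hdet : (X + Y).det = Y.det * r := by
    rw [hid, Matrix.det_mul, Matrix.det_mul, hrdet, mul_comm, ← mul_assoc, hdetY]
  have hpos := Complex.lt_def.mp (hY.det_pos (n := m))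
  simp only [Complex.zero_re, Complex.zero_im] at hpos
  rw [hdet, Complex.mul_re, Complex.ofReal_re, Complex.ofReal_im, ← hpos.2, mul_zero, sub_zero]
  nlinarith [hpos.1]


/-- Key determinant lower bound in Lemma 5.2: for Hermitian matrices `A`, `B` with
entries bounded by `M`, `A` positive semidefinite and `B ≥ α·I`, one has
`det (A + C·B) ≥ (1/2)·det B·Cⁿ` for all `C` large enough. -/
theorem det_add_smul_lower_bound (n : ℕ) (hn : 1 ≤ n) (M α : ℝ)
    (hM : 0 < M) (hα : 0 < α) :
    ∃ C₀ : ℝ, 0 < C₀ ∧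
      ∀ A B : Matrix (Fin n) (Fin n) ℂ,
        A.IsHermitian → B.IsHermitian →
        (∀ i j, ‖A i j‖ ≤ M) → (∀ i j, ‖B i j‖ ≤ M) →
        A.PosSemidef →
        (B - (α : ℂ) • (1 : Matrix (Fin n) (Fin n) ℂ)).PosSemidef →
        ∀ C : ℝ, C₀ ≤ C →
          (1 / 2) * B.det.re * C ^ n ≤ (A + (C : ℂ) • B).det.re := by
  refine ⟨1, one_pos, fun A B hAh hBh _ _ hA hBsub C hC => ?_⟩
  have hC0 : (0:ℝ) < C := lt_of_lt_of_le one_pos hC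
  -- `α • 1` is positive definite
  have hα1 : ((α : ℂ) • (1 : Matrix (Fin n) (Fin n) ℂ)).PosDef := by
    rw [Matrix.smul_one_eq_diagonal]
    exact Matrix.posDef_diagonal_iff.mpr fun i => by
      simpa using Complex.zero_lt_real.mpr hα
  -- hence `B` is positive definite
  have hBpd : B.PosDef := by
    have := hα1.add_posSemidef hBsub
    simpa using this
  -- and so is `C • B`
  have hCpos : (0:ℂ) < (C:ℂ) := Complex.zero_lt_real.mpr hC0
  have hCB : ((C : ℂ) • B).PosDef := by
    refine Matrix.PosDef.of_dotProduct_mulVec_pos ?_ (fun x hx => ?_)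
    · rw [Matrix.IsHermitian, Matrix.conjTranspose_smul, hBh.eq]
      congr 1
      simp [Complex.ext_iff]
    · rw [Matrix.smul_mulVec, dotProduct_smul]
      exact smul_pos hCpos (hBpd.dotProduct_mulVec_pos hx)
  have key := det_re_le_det_add hA hCB
  have hdetCB : ((C : ℂ) • B).det = ((C ^ n : ℝ) : ℂ) * B.det := by
    rw [Matrix.det_smul]
    push_cast
    simp
  rw [hdetCB, Complex.re_ofReal_mul] at key
  have hBre : 0 < B.det.re := (Complex.lt_def.mp hBpd.det_pos).1
  have hCn : (0:ℝ) < C ^ n := pow_pos hC0 n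
  nlinarith
end

section
/- For every constant c ∈ (0,1) there exists K > 0 such that for every integer k ≥ 1 and every u > 0 satisfying c⁻¹·e^{−π/u} < c, one has 0 ≤ ∫_{c⁻¹·e^{−π/u}}^{c} r^{k−1}·sin²(u·log r) dr ≤ K·u²·cᵏ, with the constant K independent of k and u. (Equation (4.3) of the paper.) -/
open Real

/-! Since `sin² x ≤ x²`, the integral is at most `u² ∫ r^{k-1} log² r dr`, and `r^{k-1} log² r` has the
explicit primitive `r^k ((k log r - 1)² + 1) / k³`. The primitive is nonnegative, so the integral
is at most its value at `c`, which is `≤ ((log c - 1)² + 1) cᵏ` uniformly in `k` because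
`log c < 0`. -/

noncomputable def powLogSqPrimitive (n : ℕ) (r : ℝ) : ℝ :=
  r ^ n * ((n * log r - 1) ^ 2 + 1) / n ^ 3

lemma hasDerivAt_powLogSqPrimitive (m : ℕ) {r : ℝ} (hr : r ≠ 0) :
    HasDerivAt (powLogSqPrimitive (m + 1)) (r ^ m * log r ^ 2) r := by
  have hlog : HasDerivAt log r⁻¹ r := hasDerivAt_log hr
  have hpow : HasDerivAt (fun r : ℝ => r ^ (m + 1)) ((m + 1 : ℕ) * r ^ m) r := by
    simpa using hasDerivAt_pow (m + 1) r
  have hquad : HasDerivAt (fun r => ((m + 1 : ℕ) * log r - 1) ^ 2 + 1)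
      (2 * ((m + 1 : ℕ) * log r - 1) * ((m + 1 : ℕ) * r⁻¹)) r := by
    simpa using (((hlog.const_mul ((m + 1 : ℕ) : ℝ)).sub_const 1).pow 2).add_const 1
  refine ((hpow.mul hquad).div_const _).congr_deriv ?_
  have hm : ((m : ℝ) + 1) ≠ 0 := by positivity
  push_cast
  field_simp
  ring

lemma powLogSqPrimitive_nonneg (n : ℕ) {r : ℝ} (hr : 0 ≤ r) : 0 ≤ powLogSqPrimitive n r := by
  unfold powLogSqPrimitive
  positivity

lemma powLogSqPrimitive_le {n : ℕ} (hn : 1 ≤ n) {c : ℝ} (hc0 : 0 < c) (hc1 : c ≤ 1) :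
    powLogSqPrimitive n c ≤ ((log c - 1) ^ 2 + 1) * c ^ n := by
  have hL : log c ≤ 0 := log_nonpos hc0.le hc1
  have hn' : (1 : ℝ) ≤ n := by exact_mod_cast hn
  have hquad : (n * log c - 1) ^ 2 + 1 ≤ n ^ 2 * ((log c - 1) ^ 2 + 1) := by
    nlinarith [mul_nonneg (sub_nonneg.2 hn') (neg_nonneg.2 hL)]
  have hcube : (n : ℝ) ^ 2 ≤ n ^ 3 := pow_le_pow_right₀ hn' (by norm_num)
  unfold powLogSqPrimitive
  rw [div_le_iff₀ (by positivity)]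
  calc c ^ n * ((n * log c - 1) ^ 2 + 1)
      ≤ c ^ n * (n ^ 2 * ((log c - 1) ^ 2 + 1)) := by gcongr
    _ ≤ c ^ n * (n ^ 3 * ((log c - 1) ^ 2 + 1)) := by gcongr
    _ = _ := by ring

lemma integral_pow_mul_log_sq_le (m : ℕ) {a c : ℝ} (ha : 0 < a) (hac : a ≤ c) (hc1 : c ≤ 1) :
    ∫ r in a..c, r ^ m * log r ^ 2 ≤ ((log c - 1) ^ 2 + 1) * c ^ (m + 1) := by
  have hpos : ∀ r ∈ Set.uIcc a c, 0 < r := fun r hr =>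
    ha.trans_le (Set.uIcc_of_le hac ▸ hr).1
  have hcont : ContinuousOn (fun r : ℝ => r ^ m * log r ^ 2) (Set.uIcc a c) :=
    (continuousOn_pow m).mul
      ((continuousOn_log.mono fun r hr => (hpos r hr).ne').pow 2)
  rw [intervalIntegral.integral_eq_sub_of_hasDerivAt
    (fun r hr => hasDerivAt_powLogSqPrimitive m (hpos r hr).ne') hcont.intervalIntegrable]
  linarith [powLogSqPrimitive_nonneg (m + 1) ha.le,
    powLogSqPrimitive_le (Nat.le_add_left 1 m) (ha.trans_le hac) hc1]

lemma integral_pow_mul_sin_sq_le (m : ℕ) (u : ℝ) {a c : ℝ} (ha : 0 < a) (hac : a ≤ c) :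
    ∫ r in a..c, r ^ m * sin (u * log r) ^ 2 ≤ u ^ 2 * ∫ r in a..c, r ^ m * log r ^ 2 := by
  have hlog : ContinuousOn log (Set.uIcc a c) := continuousOn_log.mono fun r hr =>
    (ha.trans_le (Set.uIcc_of_le hac ▸ hr).1).ne'
  rw [← intervalIntegral.integral_const_mul]
  refine intervalIntegral.integral_mono_on hac
    (((continuousOn_pow m).mul ((continuous_sin.comp_continuousOn
      (continuousOn_const.mul hlog)).pow 2)).intervalIntegrable)
    ((continuousOn_const.mul ((continuousOn_pow m).mul (hlog.pow 2))).intervalIntegrable)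
    fun r hr => ?_
  have hrm : 0 ≤ r ^ m := pow_nonneg (ha.le.trans hr.1) m
  calc r ^ m * sin (u * log r) ^ 2 ≤ r ^ m * (u * log r) ^ 2 :=
        mul_le_mul_of_nonneg_left sin_sq_le_sq hrm
    _ = u ^ 2 * (r ^ m * log r ^ 2) := by ring

/-- Equation (4.3): for `k ≥ 1`,
`0 ≤ ∫_{c⁻¹ e^{-π/u}}^{c} r^{k-1} sin²(u log r) dr ≤ K u² cᵏ`
with `K` independent of `k` and `u`. -/
theorem collar_integral_pos_power (c : ℝ) (hc0 : 0 < c) (hc1 : c < 1) :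
    ∃ K : ℝ, 0 < K ∧ ∀ k : ℕ, 1 ≤ k → ∀ u : ℝ, 0 < u →
      c⁻¹ * Real.exp (-(π / u)) < c →
      0 ≤ (∫ r in (c⁻¹ * Real.exp (-(π / u)))..c,
            r ^ (k - 1) * Real.sin (u * Real.log r) ^ 2) ∧
      (∫ r in (c⁻¹ * Real.exp (-(π / u)))..c,
            r ^ (k - 1) * Real.sin (u * Real.log r) ^ 2) ≤ K * u ^ 2 * c ^ k := by
  refine ⟨(log c - 1) ^ 2 + 1, by positivity, fun k hk u _ hac => ?_⟩
  obtain ⟨m, rfl⟩ : ∃ m, k = m + 1 := ⟨k - 1, (Nat.succ_pred_eq_of_pos hk).symm⟩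
  rw [Nat.add_sub_cancel]
  have ha : 0 < c⁻¹ * exp (-(π / u)) := by positivity
  refine ⟨intervalIntegral.integral_nonneg hac.le fun r hr =>
    mul_nonneg (pow_nonneg (ha.le.trans hr.1) m) (sq_nonneg _), ?_⟩
  calc _ ≤ u ^ 2 * ∫ r in c⁻¹ * exp (-(π / u))..c, r ^ m * log r ^ 2 :=
        integral_pow_mul_sin_sq_le m u ha hac.le
    _ ≤ u ^ 2 * (((log c - 1) ^ 2 + 1) * c ^ (m + 1)) :=
        mul_le_mul_of_nonneg_left (integral_pow_mul_log_sq_le m ha hac.le hc1.le) (sq_nonneg u)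
    _ = _ := by ring
end

section
/- For every constant c ∈ (0,1) there exists K > 0 such that for every integer k ≤ −1 and every u > 0 satisfying c⁻¹·e^{−π/u} < c, one has 0 ≤ ∫_{c⁻¹·e^{−π/u}}^{c} r^{k−1}·sin²(u·log r) dr ≤ K·u²·c^{−k}·e^{−kπ/u}, with the constant K independent of k and u. (Equation (4.4) of the paper: the integral is O(u²)·c^{−k}·ρᵏ with ρ = e^{−π/u}.) -/
/-!
Put `a = c⁻¹ e^{-π/u}`, so that `u log a + π = -u log c`. Since `sin² x = sin² (x + π) ≤ (x + π)²`,
the integrand is at most `r^{k-1} (u log r + π)²`, and `r^{k-1} ≤ a^{k+1} r^{-2}` on `[a, c]`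
because `k + 1 ≤ 0`. The function `(α log r + β)² / r²` has the explicit primitive
`F(r) = -((α log r + β + α)² + α²) / r`, which is negative, so for `α = u`, `β = π` its integral
over `[a, c]` is at most `-F(a) = ((u log a + π + u)² + u²) / a = u² ((1 - log c)² + 1) / a`.
Altogether the integral is at most `((1 - log c)² + 1) u² a^k`, and `a^k = c^{-k} e^{-kπ/u}`.
-/

open Real Set

lemma zpow_le_zpow_left_of_nonpos₀ {a r : ℝ} {n : ℤ} (ha : 0 < a) (har : a ≤ r) (hn : n ≤ 0) :
    r ^ n ≤ a ^ n := by
  simpa [zpow_neg] using inv_anti₀ (zpow_pos ha _) (zpow_le_zpow_left₀ (neg_nonneg.2 hn) ha.le har)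

lemma zpow_sub_one_le_zpow_add_one_div_sq {a r : ℝ} {k : ℤ} (ha : 0 < a) (har : a ≤ r)
    (hk : k ≤ -1) : r ^ (k - 1) ≤ a ^ (k + 1) / r ^ 2 := by
  have hr : r ≠ 0 := (ha.trans_le har).ne'
  calc r ^ (k - 1) = r ^ (k + 1) / r ^ 2 := by
        rw [show k - 1 = k + 1 - 2 by ring, zpow_sub₀ hr]; norm_cast
    _ ≤ a ^ (k + 1) / r ^ 2 := by
        gcongr; exact zpow_le_zpow_left_of_nonpos₀ ha har (by omega)

lemma sin_sq_le_sq_add_pi (x : ℝ) : sin x ^ 2 ≤ (x + π) ^ 2 := by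
  simpa [sin_add_pi] using sin_sq_le_sq (x := x + π)

lemma hasDerivAt_primitive_sq_log_div_sq (α β : ℝ) {r : ℝ} (hr : r ≠ 0) :
    HasDerivAt (fun x ↦ -(((α * log x + β + α) ^ 2 + α ^ 2) / x))
      ((α * log r + β) ^ 2 / r ^ 2) r := by
  have h := (((((hasDerivAt_log hr).const_mul α).add_const β).add_const α).pow 2).add_const
    (α ^ 2) |>.div (hasDerivAt_id' r) hr |>.neg
  exact h.congr_deriv (by simp only [Pi.pow_apply]; field_simp; ring)

lemma ne_zero_of_mem_uIcc {a b r : ℝ} (ha : 0 < a) (hab : a ≤ b) (hr : r ∈ uIcc a b) : r ≠ 0 := by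
  rw [uIcc_of_le hab] at hr
  exact (ha.trans_le hr.1).ne'

lemma integral_sq_log_div_sq_le (α β : ℝ) {a b : ℝ} (ha : 0 < a) (hab : a ≤ b) :
    ∫ r in a..b, (α * log r + β) ^ 2 / r ^ 2 ≤ ((α * log a + β + α) ^ 2 + α ^ 2) / a := by
  have hcont : ContinuousOn (fun r ↦ (α * log r + β) ^ 2 / r ^ 2) (uIcc a b) :=
    continuousOn_of_forall_continuousAt fun r hr ↦ by
      have := ne_zero_of_mem_uIcc ha hab hr
      fun_prop (disch := simp [this])
  rw [intervalIntegral.integral_eq_sub_of_hasDerivAt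
    (fun r hr ↦ hasDerivAt_primitive_sq_log_div_sq α β (ne_zero_of_mem_uIcc ha hab hr))
    hcont.intervalIntegrable]
  have hb : 0 < b := ha.trans_le hab
  have : 0 ≤ ((α * log b + β + α) ^ 2 + α ^ 2) / b := by positivity
  linarith

lemma integral_zpow_mul_sin_sq_log_le {a b : ℝ} {k : ℤ} (u : ℝ) (ha : 0 < a) (hab : a ≤ b)
    (hk : k ≤ -1) :
    ∫ r in a..b, r ^ (k - 1) * sin (u * log r) ^ 2 ≤
      a ^ k * ((u * log a + π + u) ^ 2 + u ^ 2) := by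
  have hcont : ContinuousOn (fun r ↦ r ^ (k - 1) * sin (u * log r) ^ 2) (uIcc a b) :=
    continuousOn_of_forall_continuousAt fun r hr ↦ by
      have := ne_zero_of_mem_uIcc ha hab hr
      fun_prop (disch := simp [this])
  have hbound_cont :
      ContinuousOn (fun r ↦ a ^ (k + 1) * ((u * log r + π) ^ 2 / r ^ 2)) (uIcc a b) :=
    continuousOn_of_forall_continuousAt fun r hr ↦ by
      have := ne_zero_of_mem_uIcc ha hab hr
      fun_prop (disch := simp [this])
  have hpointwise : ∀ r ∈ Icc a b,
      r ^ (k - 1) * sin (u * log r) ^ 2 ≤ a ^ (k + 1) * ((u * log r + π) ^ 2 / r ^ 2) := by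
    rintro r ⟨har, -⟩
    calc r ^ (k - 1) * sin (u * log r) ^ 2 ≤ a ^ (k + 1) / r ^ 2 * (u * log r + π) ^ 2 :=
          mul_le_mul (zpow_sub_one_le_zpow_add_one_div_sq ha har hk) (sin_sq_le_sq_add_pi _)
            (sq_nonneg _) (by positivity)
      _ = a ^ (k + 1) * ((u * log r + π) ^ 2 / r ^ 2) := by ring
  calc ∫ r in a..b, r ^ (k - 1) * sin (u * log r) ^ 2
      ≤ ∫ r in a..b, a ^ (k + 1) * ((u * log r + π) ^ 2 / r ^ 2) :=
        intervalIntegral.integral_mono_on hab hcont.intervalIntegrable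
          hbound_cont.intervalIntegrable hpointwise
    _ = a ^ (k + 1) * ∫ r in a..b, (u * log r + π) ^ 2 / r ^ 2 :=
        intervalIntegral.integral_const_mul _ _
    _ ≤ a ^ (k + 1) * (((u * log a + π + u) ^ 2 + u ^ 2) / a) := by
        gcongr; exact integral_sq_log_div_sq_le u π ha hab
    _ = a ^ k * ((u * log a + π + u) ^ 2 + u ^ 2) := by
        rw [zpow_add_one₀ ha.ne']; field_simp

lemma inv_mul_exp_neg_div_zpow (c u : ℝ) (k : ℤ) :
    (c⁻¹ * exp (-(π / u))) ^ k = c ^ (-k) * exp (-(k : ℝ) * π / u) := by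
  rw [mul_zpow, inv_zpow, ← zpow_neg, ← rpow_intCast (exp _), ← exp_mul]
  congr 2
  ring

theorem collar_integral_neg_power_general (c : ℝ) (hc0 : 0 < c) :
    ∃ K : ℝ, 0 < K ∧ ∀ k : ℤ, k ≤ -1 → ∀ u : ℝ, 0 < u →
      c⁻¹ * Real.exp (-(π / u)) < c →
      0 ≤ (∫ r in (c⁻¹ * Real.exp (-(π / u)))..c,
            r ^ (k - 1) * Real.sin (u * Real.log r) ^ 2) ∧
      (∫ r in (c⁻¹ * Real.exp (-(π / u)))..c,
            r ^ (k - 1) * Real.sin (u * Real.log r) ^ 2) ≤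
        K * u ^ 2 * c ^ (-k) * Real.exp (-(k : ℝ) * π / u) := by
  refine ⟨(1 - log c) ^ 2 + 1, by positivity, fun k hk u hu hac ↦ ⟨?_, ?_⟩⟩
  · refine intervalIntegral.integral_nonneg hac.le fun r hr ↦ ?_
    have : 0 < r := lt_of_lt_of_le (by positivity) hr.1
    positivity
  · have hlog : u * log (c⁻¹ * exp (-(π / u))) + π = -(u * log c) := by
      rw [log_mul (by positivity) (exp_ne_zero _), log_inv, log_exp]
      field_simp
      ring
    refine (integral_zpow_mul_sin_sq_log_le u (by positivity) hac.le hk).trans_eq ?_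
    rw [hlog, inv_mul_exp_neg_div_zpow]
    ring

/-- Equation (4.4): for `k ≤ -1`,
`0 ≤ ∫_{c⁻¹ e^{-π/u}}^{c} r^{k-1} sin²(u log r) dr ≤ K u² c^{-k} e^{-kπ/u}`
with `K` independent of `k` and `u`. -/
theorem collar_integral_neg_power (c : ℝ) (hc0 : 0 < c) (hc1 : c < 1) :
    ∃ K : ℝ, 0 < K ∧ ∀ k : ℤ, k ≤ -1 → ∀ u : ℝ, 0 < u →
      c⁻¹ * Real.exp (-(π / u)) < c →
      0 ≤ (∫ r in (c⁻¹ * Real.exp (-(π / u)))..c,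
            r ^ (k - 1) * Real.sin (u * Real.log r) ^ 2) ∧
      (∫ r in (c⁻¹ * Real.exp (-(π / u)))..c,
            r ^ (k - 1) * Real.sin (u * Real.log r) ^ 2) ≤
        K * u ^ 2 * c ^ (-k) * Real.exp (-(k : ℝ) * π / u) :=
  collar_integral_neg_power_general c hc0
end
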